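/- arXiv:2111.03622 — 2 statements merged into one kernel-verified Lean document; each statement's English description precedes it below -/
import Mathlib

section
/- Let λ be a partition of n with largest part λ_1, and set j = n − λ_1. Then the number d_λ of standard Young tableaux of shape λ satisfies d_λ ≤ C(n, j) · √(j!). -/
/-- `l` is the row-length function of a partition of `n` (0-indexed rows). -/
def IsPartition (l : ℕ → ℕ) (n : ℕ) : Prop :=
  Antitone l ∧ (∑ i ∈ Finset.range n, l i = n) ∧ ∀ i, n ≤ i → l i = 0

/-- The cells of the Young diagram with row lengths `l` (0-indexed). -/
def cellsOf (l : ℕ → ℕ) : Set (ℕ × ℕ) := {c | c.2 < l c.1}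

/-- `T` is a standard Young tableau of the shape with row lengths `l` and `n` boxes:
a bijective filling with `1, …, n` that is increasing along rows and columns
(normalized to `0` outside the diagram). -/
def IsSYT (l : ℕ → ℕ) (n : ℕ) (T : ℕ × ℕ → ℕ) : Prop :=
  (∀ c, c ∉ cellsOf l → T c = 0) ∧
  (∀ c ∈ cellsOf l, 1 ≤ T c ∧ T c ≤ n) ∧
  (∀ m, 1 ≤ m → m ≤ n → ∃! c, c ∈ cellsOf l ∧ T c = m) ∧
  (∀ c d, c ∈ cellsOf l → d ∈ cellsOf l → c.1 ≤ d.1 → c.2 ≤ d.2 → c ≠ d → T c < T d)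

/-- The number `d_λ` of standard Young tableaux of shape `l`. -/
noncomputable def sytNum (l : ℕ → ℕ) (n : ℕ) : ℕ :=
  Nat.card { T : ℕ × ℕ → ℕ // IsSYT l n T }

/-- The conjugate (transpose) partition. -/
noncomputable def conj (l : ℕ → ℕ) : ℕ → ℕ := fun j => Nat.card { i : ℕ // j < l i }

/-- The shape obtained from `l` by removing the last box of row `i`. -/
def removeBox (l : ℕ → ℕ) (i : ℕ) : ℕ → ℕ := Function.update l i (l i - 1)

/-- The hook length of the box `(a, b)` (0-indexed) of the shape `l`. -/
noncomputable def hookLen (l : ℕ → ℕ) (a b : ℕ) : ℕ := (l a - b) + (conj l b - a) - 1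

/-!
Removing the cell that holds the largest entry gives `d_λ = ∑ d_{λ - □}`, the sum running over
the removable boxes `□` of `λ`. Let `λ̄` be `λ` without its first row, a partition of
`j = n - λ₁`. A removable box of `λ` either ends the first row, and then `λ - □` has lower rows
`λ̄`, or it is a removable box of `λ̄`; by induction on `n` and Pascal's rule,
`d_λ ≤ C(n, j) d_λ̄`.

It remains to see `d_μ ^ 2 ≤ j!` for `μ ⊢ j`, which follows from `∑_{μ ⊢ j} d_μ ^ 2 = j!`.
Adding a box in one row and removing one in another row commute, so on Young's lattice the
up and down operators satisfy `DU = UD + I`. Together with the recursion this gives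
`∑_□ d_{μ + □} = (m + 1) d_μ` for `μ ⊢ m`, and counting pairs (partition, removable box) in two
ways gives `∑_{λ ⊢ m + 1} d_λ ^ 2 = (m + 1) ∑_{μ ⊢ m} d_μ ^ 2`.
-/

open Finset Function
open scoped Nat

def addBox (l : ℕ → ℕ) (i : ℕ) : ℕ → ℕ := update l i (l i + 1)

def lowerRows (l : ℕ → ℕ) : ℕ → ℕ := fun i => l (i + 1)

def removableRows (l : ℕ → ℕ) (N : ℕ) : Finset ℕ := {k ∈ range N | l (k + 1) < l k}

def addableRows (l : ℕ → ℕ) (N : ℕ) : Finset ℕ := {i ∈ range N | i = 0 ∨ l i < l (i - 1)}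

def lastCell (l : ℕ → ℕ) (k : ℕ) : ℕ × ℕ := (k, l k - 1)

theorem mem_removableRows {l : ℕ → ℕ} {N k : ℕ} :
    k ∈ removableRows l N ↔ k < N ∧ l (k + 1) < l k := by
  simp [removableRows]

theorem mem_addableRows {l : ℕ → ℕ} {N i : ℕ} :
    i ∈ addableRows l N ↔ i < N ∧ (i = 0 ∨ l i < l (i - 1)) := by
  simp [addableRows]

theorem pos_of_mem_removableRows {l : ℕ → ℕ} {N k : ℕ} (hk : k ∈ removableRows l N) : 0 < l k := by
  have := (mem_removableRows.mp hk).2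
  omega

theorem Antitone.update_nat {α : Type*} [Preorder α] {f : ℕ → α} (hf : Antitone f) {k : ℕ}
    {v : α} (hv : f (k + 1) ≤ v) (hv' : ∀ j, j + 1 = k → v ≤ f j) :
    Antitone (update f k v) := by
  refine antitone_nat_of_succ_le fun j => ?_
  rcases eq_or_ne (j + 1) k with rfl | h
  · simpa using hv' j rfl
  rcases eq_or_ne j k with rfl | h'
  · simpa using hv
  simpa [h, h'] using hf j.le_succ

theorem Antitone.mul_le_sum_range {f : ℕ → ℕ} (hf : Antitone f) {i N : ℕ} (hi : i < N) :
    (i + 1) * f i ≤ ∑ j ∈ range N, f j :=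
  calc (i + 1) * f i = ∑ _j ∈ range (i + 1), f i := by simp
    _ ≤ ∑ j ∈ range (i + 1), f j :=
      sum_le_sum fun j hj => hf (Nat.lt_succ_iff.mp (mem_range.mp hj))
    _ ≤ ∑ j ∈ range N, f j := sum_le_sum_of_subset (range_subset_range.mpr hi)

theorem Finset.sum_update_add_self {ι M : Type*} [DecidableEq ι] [AddCommMonoid M]
    {s : Finset ι} {f : ι → M} {k : ι} (hk : k ∈ s) (v : M) :
    ∑ j ∈ s, update f k v j + f k = v + ∑ j ∈ s, f j := by
  rw [sum_update_of_mem hk, sdiff_singleton_eq_erase, ← add_sum_erase _ f hk]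
  abel

namespace IsPartition

variable {l : ℕ → ℕ} {n m : ℕ}

theorem apply_le (hl : IsPartition l n) (i : ℕ) : l i ≤ n := by
  rcases lt_or_ge i n with h | h
  · exact hl.2.1 ▸ single_le_sum (fun _ _ => Nat.zero_le _) (mem_range.mpr h)
  · simp [hl.2.2 i h]

theorem lt_of_pos (hl : IsPartition l n) {i : ℕ} (h : 0 < l i) : i < n := by
  by_contra! hi
  simp [hl.2.2 i hi] at h

theorem eq_zero (hl : IsPartition l 0) (i : ℕ) : l i = 0 :=
  hl.2.2 i i.zero_le

theorem zero_lt_apply_zero (hl : IsPartition l (n + 1)) : 0 < l 0 := by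
  by_contra! h
  have := hl.2.1
  rw [sum_eq_zero fun i _ => Nat.eq_zero_of_le_zero ((hl.1 i.zero_le).trans h)] at this
  omega

theorem sum_range_of_le (hl : IsPartition l n) {N : ℕ} (hN : n ≤ N) :
    ∑ i ∈ range N, l i = n := by
  rw [← sum_range_add_sum_Ico _ hN, hl.2.1, sum_eq_zero fun i hi => hl.2.2 i (mem_Ico.mp hi).1,
    add_zero]

theorem of_sum_range (ha : Antitone l) {N : ℕ} (hN : n ≤ N) (hs : ∑ i ∈ range N, l i = n)
    (hz : l N = 0) : IsPartition l n := by
  have hzero : ∀ i, n ≤ i → l i = 0 := by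
    intro i hi
    rcases lt_or_ge i N with hiN | hiN
    · by_contra h
      have := (Nat.le_mul_of_pos_right (i + 1) (Nat.pos_of_ne_zero h)).trans
        (hs ▸ ha.mul_le_sum_range hiN)
      omega
    · exact Nat.eq_zero_of_le_zero (hz ▸ ha hiN)
  refine ⟨ha, ?_, hzero⟩
  rw [← sum_range_add_sum_Ico _ hN, sum_eq_zero fun i hi => hzero i (mem_Ico.mp hi).1] at hs
  simpa using hs

theorem removeBox (hl : IsPartition l (m + 1)) {k : ℕ} (hk : l (k + 1) < l k) :
    IsPartition (removeBox l k) m := by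
  have hkm : k < m + 1 := hl.lt_of_pos (by omega)
  refine of_sum_range (hl.1.update_nat (by omega) fun j hj => ?_) (Nat.le_add_right m 1) ?_ ?_
  · exact (Nat.sub_le _ _).trans (hl.1 (by omega))
  · have := sum_update_add_self (f := l) (mem_range.mpr hkm) (l k - 1)
    rw [hl.2.1] at this
    rw [_root_.removeBox]
    omega
  · rw [_root_.removeBox, update_of_ne (by omega), hl.2.2 _ le_rfl]

theorem addBox (hl : IsPartition l m) {i : ℕ} (hi : i = 0 ∨ l i < l (i - 1)) :
    IsPartition (addBox l i) (m + 1) := by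
  have him : i < m + 1 := by
    rcases hi with rfl | hi
    · omega
    · by_contra! h
      simp [hl.2.2 (i - 1) (by omega)] at hi
  have hanti : Antitone (_root_.addBox l i) := by
    refine hl.1.update_nat (by have := hl.1 (Nat.le_add_right i 1); omega) fun j hj => ?_
    rcases hi with rfl | hi
    · omega
    · rw [show j = i - 1 by omega]
      omega
  refine of_sum_range hanti le_rfl ?_ ?_
  · have := sum_update_add_self (f := l) (mem_range.mpr him) (l i + 1)
    rw [hl.sum_range_of_le m.le_succ] at this
    rw [_root_.addBox]
    omega
  · rw [_root_.addBox, update_of_ne (by omega), hl.2.2 _ m.le_succ]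

theorem lowerRows (hl : IsPartition l n) : IsPartition (lowerRows l) (n - l 0) := by
  refine of_sum_range (N := n) (fun a b h => hl.1 (by omega)) (Nat.sub_le _ _) ?_
    (hl.2.2 _ n.le_succ)
  have := sum_range_succ' l n
  rw [hl.sum_range_of_le n.le_succ] at this
  simp only [_root_.lowerRows]
  omega

instance finite (n : ℕ) : Finite {l : ℕ → ℕ // IsPartition l n} := by
  refine Finite.of_injective (fun (l : {l // IsPartition l n}) (i : Fin n) =>
    (⟨l.1 i, Nat.lt_succ_of_le (l.2.apply_le i)⟩ : Fin (n + 1)))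
    fun a b hab => Subtype.ext (funext fun i => ?_)
  rcases lt_or_ge i n with h | h
  · simpa using congrFun hab ⟨i, h⟩
  · rw [a.2.2.2 i h, b.2.2.2 i h]

noncomputable instance (n : ℕ) : Fintype {l : ℕ → ℕ // IsPartition l n} := Fintype.ofFinite _

end IsPartition

theorem removableRows_eq_empty {l : ℕ → ℕ} (hl : IsPartition l 0) (N : ℕ) :
    removableRows l N = ∅ :=
  filter_false_of_mem fun k _ => by simp [hl.eq_zero]

section Cells

variable {l : ℕ → ℕ} {k : ℕ}

theorem lastCell_mem_cellsOf (hk : 0 < l k) : lastCell l k ∈ cellsOf l := by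
  simp [lastCell, cellsOf, hk]

theorem cellsOf_removeBox (hk : 0 < l k) :
    cellsOf (removeBox l k) = cellsOf l \ {lastCell l k} := by
  ext ⟨a, b⟩
  rcases eq_or_ne a k with rfl | h
  · simp [cellsOf, removeBox, lastCell]
    omega
  · simp [cellsOf, removeBox, lastCell, h]

theorem insert_lastCell_cellsOf_removeBox (hk : 0 < l k) :
    insert (lastCell l k) (cellsOf (removeBox l k)) = cellsOf l := by
  rw [cellsOf_removeBox hk, Set.insert_sdiff_singleton,
    Set.insert_eq_of_mem (lastCell_mem_cellsOf hk)]

theorem lastCell_notMem_cellsOf_removeBox (hk : 0 < l k) :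
    lastCell l k ∉ cellsOf (removeBox l k) := by
  simp [cellsOf_removeBox hk]

theorem not_lastCell_lt (hl : Antitone l) (hk : l (k + 1) < l k) {d : ℕ × ℕ}
    (hd : d ∈ cellsOf l) : ¬ lastCell l k < d := by
  obtain ⟨a, b⟩ := d
  change b < l a at hd
  simp only [lastCell, Prod.lt_iff]
  rintro (⟨h₁, h₂⟩ | ⟨h₁, h₂⟩)
  · have := hl (show k + 1 ≤ a by omega)
    omega
  · have := hl h₁
    omega

theorem eq_lastCell_of_maximal {c : ℕ × ℕ} (hc : c ∈ cellsOf l)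
    (hmax : ∀ d ∈ cellsOf l, ¬ c < d) : c = lastCell l c.1 ∧ l (c.1 + 1) < l c.1 := by
  obtain ⟨a, b⟩ := c
  simp only [cellsOf, Set.mem_ofPred_eq] at hc hmax
  have hrow := hmax (a, b + 1)
  have hcol := hmax (a + 1, b)
  simp only [Prod.lt_iff] at hrow hcol
  refine ⟨Prod.ext rfl ?_, ?_⟩ <;> simp only [lastCell] <;> omega

end Cells

theorem isSYT_iff {l : ℕ → ℕ} {n : ℕ} {T : ℕ × ℕ → ℕ} :
    IsSYT l n T ↔ (∀ c ∉ cellsOf l, T c = 0) ∧ Set.BijOn T (cellsOf l) (Set.Icc 1 n) ∧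
      StrictMonoOn T (cellsOf l) := by
  refine and_congr_right fun _ => ?_
  rw [← and_assoc]
  refine and_congr ⟨fun ⟨hmaps, hunique⟩ => ⟨fun c hc => hmaps c hc, ?_, ?_⟩,
    fun h => ⟨fun c hc => h.mapsTo hc, ?_⟩⟩ ?_
  · intro c hc d hd hcd
    obtain ⟨e, -, he⟩ := hunique (T c) (hmaps c hc).1 (hmaps c hc).2
    exact (he c ⟨hc, rfl⟩).trans (he d ⟨hd, hcd.symm⟩).symm
  · exact fun v hv => (hunique v hv.1 hv.2).exists
  · intro v hv₁ hv₂
    obtain ⟨c, hc, rfl⟩ := h.surjOn ⟨hv₁, hv₂⟩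
    exact ⟨c, ⟨hc, rfl⟩, fun d hd => h.injOn hd.1 hc hd.2⟩
  · simp only [StrictMonoOn, lt_iff_le_and_ne, Prod.le_def]
    exact ⟨fun h c hc d hd hcd => h c d hc hd hcd.1.1 hcd.1.2 hcd.2,
      fun h c d hc hd h₁ h₂ hne => h hc hd ⟨⟨h₁, h₂⟩, hne⟩⟩

namespace IsSYT

variable {l : ℕ → ℕ} {m : ℕ} {T : ℕ × ℕ → ℕ}

theorem update_lastCell (hl : Antitone l) {k : ℕ} (hk : l (k + 1) < l k)
    (hT : IsSYT (removeBox l k) m T) : IsSYT l (m + 1) (update T (lastCell l k) (m + 1)) := by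
  have hk₀ : 0 < l k := by omega
  obtain ⟨hzero, hbij, hmono⟩ := isSYT_iff.mp hT
  have hnot := lastCell_notMem_cellsOf_removeBox hk₀
  have heq : Set.EqOn T (update T (lastCell l k) (m + 1)) (cellsOf (removeBox l k)) :=
    fun c hc => (update_of_ne (ne_of_mem_of_not_mem hc hnot) _ _).symm
  rw [isSYT_iff, ← insert_lastCell_cellsOf_removeBox hk₀]
  refine ⟨fun c hc => ?_, ?_, ?_⟩
  · rw [Set.mem_insert_iff, not_or] at hc
    rw [update_of_ne hc.1]
    exact hzero c hc.2
  · rw [← Set.insert_Icc_right_eq_Icc_add_one (by omega)]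
    simpa using (hbij.congr heq).insert (a := lastCell l k) (by simp)
  · rw [strictMonoOn_insert_iff]
    refine ⟨fun c hc _ => ?_, fun d hd hlt => ?_, hmono.congr heq⟩
    · rw [update_self, ← heq hc]
      exact Nat.lt_succ_of_le (hbij.mapsTo hc).2
    · rw [cellsOf_removeBox hk₀] at hd
      exact absurd hlt (not_lastCell_lt hl hk hd.1)

theorem removeBox_of_apply_eq (hT : IsSYT l (m + 1) T) {c : ℕ × ℕ} (hc : c ∈ cellsOf l)
    (hTc : T c = m + 1) :
    c = lastCell l c.1 ∧ l (c.1 + 1) < l c.1 ∧ IsSYT (removeBox l c.1) m (update T c 0) := by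
  obtain ⟨hzero, hbij, hmono⟩ := isSYT_iff.mp hT
  have hmax : ∀ d ∈ cellsOf l, ¬ c < d := fun d hd hlt => by
    have := hmono hc hd hlt
    have := (hbij.mapsTo hd).2
    omega
  obtain ⟨hlast, hrem⟩ := eq_lastCell_of_maximal hc hmax
  have hcells : cellsOf (removeBox l c.1) = cellsOf l \ {c} := by
    rw [cellsOf_removeBox (by omega), ← hlast]
  have heq : Set.EqOn T (update T c 0) (cellsOf l \ {c}) :=
    fun d hd => (update_of_ne hd.2 _ _).symm
  refine ⟨hlast, hrem, isSYT_iff.mpr ?_⟩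
  rw [hcells]
  refine ⟨fun d hd => ?_, ?_, (hmono.mono Set.sdiff_subset).congr heq⟩
  · rcases eq_or_ne d c with rfl | hdc
    · exact update_self _ _ _
    · rw [update_of_ne hdc]
      exact hzero d fun h => hd ⟨h, hdc⟩
  · have := (hbij.sdiff_singleton hc).congr heq
    rwa [hTc, ← Set.insert_Icc_right_eq_Icc_add_one (by omega),
      Set.insert_sdiff_self_of_notMem (by simp)] at this

theorem eq_of_update_lastCell_eq {k k' : ℕ} {T' : ℕ × ℕ → ℕ} (hl : Antitone l)
    (hk : l (k + 1) < l k) (hk' : l (k' + 1) < l k')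
    (hT : IsSYT (removeBox l k) m T) (hT' : IsSYT (removeBox l k') m T')
    (h : update T (lastCell l k) (m + 1) = update T' (lastCell l k') (m + 1)) :
    k = k' ∧ T = T' := by
  have hval : update T' (lastCell l k') (m + 1) (lastCell l k) = m + 1 := by
    rw [← h, update_self]
  obtain rfl : k = k' := congrArg Prod.fst <|
    (isSYT_iff.mp (hT'.update_lastCell hl hk')).2.1.injOn
      (lastCell_mem_cellsOf (by omega)) (lastCell_mem_cellsOf (by omega))
      (by rw [hval, update_self])
  refine ⟨rfl, funext fun x => ?_⟩
  rcases eq_or_ne x (lastCell l k) with rfl | hx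
  · rw [hT.1 _ (lastCell_notMem_cellsOf_removeBox (by omega)),
      hT'.1 _ (lastCell_notMem_cellsOf_removeBox (by omega))]
  · simpa [update_of_ne hx] using congrFun h x

end IsSYT

theorem finite_isSYT {l : ℕ → ℕ} {n : ℕ} (hl : IsPartition l n) :
    Finite {T : ℕ × ℕ → ℕ // IsSYT l n T} := by
  have hle : ∀ T : {T // IsSYT l n T}, ∀ c, T.1 c < n + 1 := by
    intro T c
    by_cases hc : c ∈ cellsOf l
    · exact Nat.lt_succ_of_le (T.2.2.1 c hc).2
    · simp [T.2.1 c hc]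
  refine Finite.of_injective
    (fun T (c : Fin n × Fin n) => (⟨T.1 (c.1, c.2), hle T _⟩ : Fin (n + 1)))
    fun T T' h => Subtype.ext (funext fun c => ?_)
  by_cases hc : c ∈ cellsOf l
  · have hc₁ : c.1 < n := hl.lt_of_pos (Nat.zero_lt_of_lt hc)
    have hc₂ : c.2 < n := lt_of_lt_of_le hc (hl.apply_le _)
    simpa using congrFun h (⟨c.1, hc₁⟩, ⟨c.2, hc₂⟩)
  · rw [T.2.1 c hc, T'.2.1 c hc]

theorem sytNum_zero {l : ℕ → ℕ} (hl : IsPartition l 0) : sytNum l 0 = 1 := by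
  have hcells : cellsOf l = ∅ := by
    ext c
    simp [cellsOf, hl.eq_zero c.1]
  have hT : ∀ T, IsSYT l 0 T ↔ T = 0 := fun T => by
    simp [isSYT_iff, hcells, funext_iff, Set.subsingleton_empty.strictMonoOn]
  rw [sytNum, Nat.card_congr (Equiv.subtypeEquivRight hT), Nat.card_unique]

theorem sytNum_succ {l : ℕ → ℕ} {m N : ℕ} (hl : IsPartition l (m + 1)) (hN : m < N) :
    sytNum l (m + 1) = ∑ k ∈ removableRows l N, sytNum (removeBox l k) m := by
  have hrem : ∀ k ∈ removableRows l N, l (k + 1) < l k := fun k hk => (mem_removableRows.mp hk).2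
  have := fun k : removableRows l N => finite_isSYT (hl.removeBox (hrem k.1 k.2))
  let F : (Σ k : removableRows l N, {T // IsSYT (removeBox l k) m T}) →
      {T // IsSYT l (m + 1) T} :=
    fun p => ⟨update p.2.1 (lastCell l p.1) (m + 1), p.2.2.update_lastCell hl.1 (hrem _ p.1.2)⟩
  have hF : Function.Bijective F := by
    constructor
    · rintro ⟨⟨k, hk⟩, T, hT⟩ ⟨⟨k', hk'⟩, T', hT'⟩ h
      obtain ⟨rfl, rfl⟩ := IsSYT.eq_of_update_lastCell_eq hl.1 (hrem k hk) (hrem k' hk') hT hT'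
        (congrArg Subtype.val h)
      rfl
    · rintro ⟨T, hT⟩
      obtain ⟨c, hc, hTc⟩ := (isSYT_iff.mp hT).2.1.surjOn
        (⟨by omega, le_rfl⟩ : m + 1 ∈ Set.Icc 1 (m + 1))
      obtain ⟨hlast, hrem', hT'⟩ := hT.removeBox_of_apply_eq hc hTc
      have hc₁ : c.1 < N := lt_of_lt_of_le (hl.lt_of_pos (by omega)) hN
      refine ⟨⟨⟨c.1, mem_removableRows.mpr ⟨hc₁, hrem'⟩⟩, _, hT'⟩, Subtype.ext ?_⟩
      change update (update T c 0) (lastCell l c.1) (m + 1) = T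
      rw [← hlast, update_idem, ← hTc, update_eq_self]
  rw [sytNum, ← Nat.card_congr (Equiv.ofBijective F hF), Nat.card_sigma]
  exact sum_coe_sort (removableRows l N) fun k => sytNum (removeBox l k) m

section AddRemove

variable {μ : ℕ → ℕ} {i k : ℕ}

theorem removeBox_addBox_self (μ : ℕ → ℕ) (i : ℕ) : removeBox (addBox μ i) i = μ := by
  simp [removeBox, addBox]

theorem addBox_removeBox_self (hk : 0 < μ k) : addBox (removeBox μ k) k = μ := by
  simp [removeBox, addBox, Nat.sub_add_cancel hk]

theorem removeBox_addBox_comm (h : i ≠ k) :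
    removeBox (addBox μ i) k = addBox (removeBox μ k) i := by
  simp [removeBox, addBox, update_of_ne h, update_of_ne h.symm, update_comm h.symm]

theorem addable_and_removable_addBox_iff (h : i ≠ k) :
    ((i = 0 ∨ μ i < μ (i - 1)) ∧ addBox μ i (k + 1) < addBox μ i k) ↔
      (μ (k + 1) < μ k ∧ (i = 0 ∨ removeBox μ k i < removeBox μ k (i - 1))) := by
  obtain rfl | rfl | hik : i = k + 1 ∨ i = k + 2 ∨ (i ≠ k + 1 ∧ i - 1 ≠ k + 1) := by omega
  · simp only [addBox, removeBox, update_apply, Nat.add_sub_cancel]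
    split_ifs <;> simp only [false_or] <;> omega
  · simp only [addBox, removeBox, update_apply, show k + 2 - 1 = k + 1 by omega]
    split_ifs <;> simp only [false_or] <;> omega
  · simp only [addBox, removeBox, update_apply]
    split_ifs <;> omega

end AddRemove

theorem addableRows_eq_insert_zero {μ : ℕ → ℕ} {m N : ℕ} (hμ : IsPartition μ m) (hN : m < N) :
    addableRows μ N = insert 0 ((removableRows μ N).image (· + 1)) := by
  ext i
  simp only [mem_addableRows, mem_insert, mem_image, mem_removableRows]
  constructor
  · rintro ⟨hi, rfl | hi'⟩
    · exact Or.inl rfl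
    · exact Or.inr ⟨i - 1, by grind⟩
  · rintro (rfl | ⟨k, ⟨hk, hk'⟩, rfl⟩)
    · exact ⟨by omega, Or.inl rfl⟩
    · have := hμ.lt_of_pos (show 0 < μ k by omega)
      exact ⟨by omega, Or.inr (by simpa using hk')⟩

theorem card_addableRows {μ : ℕ → ℕ} {m N : ℕ} (hμ : IsPartition μ m) (hN : m < N) :
    #(addableRows μ N) = #(removableRows μ N) + 1 := by
  rw [addableRows_eq_insert_zero hμ hN, card_insert_of_notMem (by simp),
    card_image_of_injective _ (add_left_injective 1)]

theorem mem_removableRows_addBox_self {μ : ℕ → ℕ} (hμ : Antitone μ) {i N : ℕ} (hi : i < N) :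
    i ∈ removableRows (addBox μ i) N := by
  have := hμ (Nat.le_succ i)
  simp only [mem_removableRows, addBox, update_self, update_of_ne (Nat.succ_ne_self i)]
  exact ⟨hi, by omega⟩

theorem mem_addableRows_removeBox_self {μ : ℕ → ℕ} (hμ : Antitone μ) {k N : ℕ}
    (hk : k ∈ removableRows μ N) : k ∈ addableRows (removeBox μ k) N := by
  obtain ⟨hkN, hk⟩ := mem_removableRows.mp hk
  refine mem_addableRows.mpr ⟨hkN, or_iff_not_imp_left.mpr fun hk₀ => ?_⟩
  have := hμ (Nat.sub_le k 1)
  simp only [removeBox, update_self, update_of_ne (show k - 1 ≠ k by omega)]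
  omega

/-- The relation `DU = UD + I` between the up and down operators of Young's lattice. -/
theorem sum_addableRows_sum_removableRows {M : Type*} [AddCommMonoid M] (g : (ℕ → ℕ) → M)
    {μ : ℕ → ℕ} {m N : ℕ} (hμ : IsPartition μ m) (hN : m < N) :
    ∑ i ∈ addableRows μ N, ∑ k ∈ removableRows (addBox μ i) N, g (removeBox (addBox μ i) k) =
      g μ + ∑ k ∈ removableRows μ N, ∑ i ∈ addableRows (removeBox μ k) N,
        g (addBox (removeBox μ k) i) := by
  have hoff : ∑ i ∈ addableRows μ N, ∑ k ∈ (removableRows (addBox μ i) N).erase i,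
        g (removeBox (addBox μ i) k) =
      ∑ k ∈ removableRows μ N, ∑ i ∈ (addableRows (removeBox μ k) N).erase k,
        g (addBox (removeBox μ k) i) := by
    rw [sum_comm' (t' := removableRows μ N)
      (s' := fun k => (addableRows (removeBox μ k) N).erase k)]
    · exact sum_congr rfl fun k _ => sum_congr rfl fun i hi => by
        rw [removeBox_addBox_comm (ne_of_mem_erase hi)]
    · intro i k
      simp only [mem_erase, mem_addableRows, mem_removableRows]
      rcases eq_or_ne i k with rfl | h
      · simp
      · have := addable_and_removable_addBox_iff (μ := μ) h
        tauto
  calc _ = ∑ i ∈ addableRows μ N, (g μ + ∑ k ∈ (removableRows (addBox μ i) N).erase i,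
          g (removeBox (addBox μ i) k)) :=
        sum_congr rfl fun i hi => by
          rw [← add_sum_erase _ _ (mem_removableRows_addBox_self hμ.1 (mem_addableRows.mp hi).1),
            removeBox_addBox_self]
    _ = g μ + ∑ k ∈ removableRows μ N, (g μ + ∑ i ∈ (addableRows (removeBox μ k) N).erase k,
          g (addBox (removeBox μ k) i)) := by
        rw [sum_add_distrib, sum_add_distrib, hoff, sum_const, sum_const, card_addableRows hμ hN,
          succ_nsmul, add_comm _ (g μ), add_assoc]
    _ = _ := congrArg (g μ + ·) <| sum_congr rfl fun k hk => by
        rw [← add_sum_erase _ _ (mem_addableRows_removeBox_self hμ.1 hk),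
          addBox_removeBox_self (pos_of_mem_removableRows hk)]

theorem sum_sytNum_addBox_eq_add {μ : ℕ → ℕ} {m N : ℕ} (hμ : IsPartition μ m) (hN : m < N) :
    ∑ i ∈ addableRows μ N, sytNum (addBox μ i) (m + 1) =
      sytNum μ m + ∑ k ∈ removableRows μ N, ∑ i ∈ addableRows (removeBox μ k) N,
        sytNum (addBox (removeBox μ k) i) m := by
  rw [← sum_addableRows_sum_removableRows (fun ν => sytNum ν m) hμ hN]
  exact sum_congr rfl fun i hi => sytNum_succ (hμ.addBox (mem_addableRows.mp hi).2) hN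

theorem sum_sytNum_addBox {μ : ℕ → ℕ} {m N : ℕ} (hμ : IsPartition μ m) (hN : m < N) :
    ∑ i ∈ addableRows μ N, sytNum (addBox μ i) (m + 1) = (m + 1) * sytNum μ m := by
  induction m generalizing μ with
  | zero =>
    rw [sum_sytNum_addBox_eq_add hμ hN, removableRows_eq_empty hμ, sum_empty]
    ring
  | succ m ih =>
    rw [sum_sytNum_addBox_eq_add hμ hN, sum_congr rfl fun k hk =>
      ih (hμ.removeBox (mem_removableRows.mp hk).2) (by omega), ← mul_sum,
      ← sytNum_succ hμ (by omega)]
    ring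

theorem sum_sum_removableRows_eq_sum_sum_addableRows {M : Type*} [AddCommMonoid M]
    (F : (ℕ → ℕ) → (ℕ → ℕ) → M) (m : ℕ) :
    ∑ l : {l // IsPartition l (m + 1)}, ∑ k ∈ removableRows l (m + 1), F l (removeBox l k) =
      ∑ μ : {μ // IsPartition μ m}, ∑ i ∈ addableRows μ (m + 1), F (addBox μ i) μ := by
  rw [sum_sigma', sum_sigma']
  refine sum_bij'
    (fun p hp => ⟨⟨removeBox p.1 p.2, p.1.2.removeBox (mem_removableRows.mp (mem_sigma.mp hp).2).2⟩,
      p.2⟩)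
    (fun q hq => ⟨⟨addBox q.1 q.2, q.1.2.addBox (mem_addableRows.mp (mem_sigma.mp hq).2).2⟩, q.2⟩)
    (fun p hp => mem_sigma.mpr ⟨mem_univ _,
      mem_addableRows_removeBox_self p.1.2.1 (mem_sigma.mp hp).2⟩)
    (fun q hq => mem_sigma.mpr ⟨mem_univ _,
      mem_removableRows_addBox_self q.1.2.1 (mem_addableRows.mp (mem_sigma.mp hq).2).1⟩)
    (fun p hp => Sigma.ext (Subtype.ext
      (addBox_removeBox_self (pos_of_mem_removableRows (mem_sigma.mp hp).2))) HEq.rfl)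
    (fun q _ => Sigma.ext (Subtype.ext (removeBox_addBox_self _ _)) HEq.rfl)
    (fun p hp => by
      dsimp only
      rw [addBox_removeBox_self (pos_of_mem_removableRows (mem_sigma.mp hp).2)])

theorem sum_sytNum_sq (n : ℕ) : ∑ l : {l // IsPartition l n}, sytNum l n ^ 2 = n ! := by
  induction n with
  | zero =>
    have h₀ : IsPartition (fun _ => 0) 0 := ⟨antitone_const, by simp, fun _ _ => rfl⟩
    rw [Fintype.sum_eq_single ⟨_, h₀⟩ fun l hl => absurd (Subtype.ext (funext l.2.eq_zero)) hl,
      sytNum_zero h₀]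
    rfl
  | succ m ih =>
    calc ∑ l : {l // IsPartition l (m + 1)}, sytNum l (m + 1) ^ 2
        = ∑ l : {l // IsPartition l (m + 1)}, ∑ k ∈ removableRows l (m + 1),
            sytNum l (m + 1) * sytNum (removeBox l k) m :=
          sum_congr rfl fun l _ => by rw [sq, ← mul_sum, ← sytNum_succ l.2 m.lt_succ_self]
      _ = ∑ μ : {μ // IsPartition μ m}, ∑ i ∈ addableRows μ (m + 1),
            sytNum (addBox μ i) (m + 1) * sytNum μ m :=
          sum_sum_removableRows_eq_sum_sum_addableRows (fun l μ => sytNum l (m + 1) * sytNum μ m) m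
      _ = ∑ μ : {μ // IsPartition μ m}, (m + 1) * sytNum μ m ^ 2 :=
          sum_congr rfl fun μ _ => by rw [← sum_mul, sum_sytNum_addBox μ.2 m.lt_succ_self]; ring
      _ = (m + 1)! := by rw [← mul_sum, ih, Nat.factorial_succ]

theorem sytNum_sq_le_factorial {l : ℕ → ℕ} {n : ℕ} (hl : IsPartition l n) :
    sytNum l n ^ 2 ≤ n ! :=
  sum_sytNum_sq n ▸ single_le_sum (f := fun l : {l // IsPartition l n} => sytNum l n ^ 2)
    (fun _ _ => Nat.zero_le _) (mem_univ ⟨l, hl⟩)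

theorem sum_removableRows_succ {M : Type*} [AddCommMonoid M] (l : ℕ → ℕ) (N : ℕ) (f : ℕ → M) :
    ∑ k ∈ removableRows l (N + 1), f k =
      ∑ k ∈ removableRows (lowerRows l) N, f (k + 1) + if l 1 < l 0 then f 0 else 0 := by
  rw [removableRows, removableRows, sum_filter, sum_filter, sum_range_succ']
  rfl

section LowerRows

variable (l : ℕ → ℕ) (k : ℕ)

theorem removeBox_succ_apply_zero : removeBox l (k + 1) 0 = l 0 :=
  update_of_ne k.succ_ne_zero.symm _ _

theorem lowerRows_removeBox_succ : lowerRows (removeBox l (k + 1)) = removeBox (lowerRows l) k := by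
  funext i
  simp [lowerRows, removeBox, update_apply]

theorem lowerRows_removeBox_zero : lowerRows (removeBox l 0) = lowerRows l := by
  funext i
  simp [lowerRows, removeBox]

end LowerRows

theorem sytNum_le_choose_mul_sytNum_lowerRows {l : ℕ → ℕ} {n : ℕ} (hl : IsPartition l n) :
    sytNum l n ≤ n.choose (n - l 0) * sytNum (lowerRows l) (n - l 0) := by
  induction n generalizing l with
  | zero =>
    have hlow := hl.lowerRows
    rw [Nat.zero_sub] at hlow ⊢
    simp [sytNum_zero hl, sytNum_zero hlow]
  | succ m ih =>
    have key : sytNum l (m + 1) ≤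
        m.choose (m - l 0) * ∑ k ∈ removableRows (lowerRows l) m,
          sytNum (removeBox (lowerRows l) k) (m - l 0) +
        m.choose (m + 1 - l 0) * sytNum (lowerRows l) (m + 1 - l 0) := by
      rw [sytNum_succ hl m.lt_succ_self, sum_removableRows_succ, mul_sum]
      refine add_le_add (sum_le_sum fun k hk => ?_) ?_
      · have := ih (hl.removeBox (mem_removableRows.mp hk).2)
        rwa [removeBox_succ_apply_zero, lowerRows_removeBox_succ] at this
      · split_ifs with h
        · have := ih (hl.removeBox h)
          rwa [lowerRows_removeBox_zero, removeBox, update_self,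
            show m - (l 0 - 1) = m + 1 - l 0 by omega] at this
        · exact Nat.zero_le _
    have hlow := hl.lowerRows
    rcases hj : m + 1 - l 0 with _ | j
    · rw [hj] at hlow key
      simpa [removableRows_eq_empty hlow] using key
    · have hl₀ := hl.zero_lt_apply_zero
      rw [hj] at hlow key
      rwa [show m - l 0 = j by omega, ← sytNum_succ hlow (by omega), ← add_mul,
        ← Nat.choose_succ_succ'] at key

theorem stmt6 (n : ℕ) (l : ℕ → ℕ) (hl : IsPartition l n) :
    (sytNum l n : ℝ) ≤ (n.choose (n - l 0) : ℝ) * Real.sqrt ((n - l 0).factorial) := by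
  have hlow : (sytNum (lowerRows l) (n - l 0) : ℝ) ≤ √((n - l 0)! : ℝ) :=
    Real.le_sqrt_of_sq_le (by exact_mod_cast sytNum_sq_le_factorial hl.lowerRows)
  calc (sytNum l n : ℝ) ≤ n.choose (n - l 0) * sytNum (lowerRows l) (n - l 0) := by
        exact_mod_cast sytNum_le_choose_mul_sytNum_lowerRows hl
    _ ≤ _ := by gcongr
end

section
/- Let λ be a partition of n with j = n − λ_1 held fixed, and let s_λ = 1/n + ((n−1)/n) r_λ where r_λ = (1/C(n,2)) Σ_i [C(λ_i,2) − C(λ'_i,2)]. Then s_λ = 1 − 2j/n + O(1/n²) as n → ∞; quantitatively, |s_λ − (1 − 2j/n)| ≤ C_j/n² for a constant C_j depending only on j. -/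
/-- The random transpositions character ratio `r_λ`. -/
noncomputable def rOf (l : ℕ → ℕ) (n : ℕ) : ℝ :=
  (1 / (n.choose 2 : ℝ)) *
    ∑ i ∈ Finset.range n, (((l i).choose 2 : ℝ) - ((conj l i).choose 2 : ℝ))

/-
Write `A = ∑_{i ≥ 1} C(λ_i, 2)` and `B = ∑_i C(λ'_i, 2)`. Substituting `λ_1 = n - j` into the
definition gives the exact identity `s_λ - (1 - 2j/n) = (j² + j + 2(A - B)) / n²`. The rows below
the first hold `j` boxes, so each has length at most `j` and at most `j` of them are nonempty;
hence `A ≤ j²`, only the first `j` columns have length above one, and all columns have length at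
most `j + 1`, giving `B ≤ j · C(j + 1, 2)`.
-/

open Finset

lemma conj_le_of_forall_lt {l : ℕ → ℕ} {b k : ℕ} (h : ∀ i, b < l i → i < k) : conj l b ≤ k :=
  (Nat.card_mono (Set.finite_Iio k) fun i hi => h i hi).trans_eq (by simp)

namespace IsPartition

variable {l : ℕ → ℕ} {n : ℕ}

lemma head_le (hl : IsPartition l n) (hn : 0 < n) : l 0 ≤ n :=
  hl.2.1 ▸ single_le_sum (fun i _ => Nat.zero_le (l i)) (mem_range.2 hn)

lemma sum_Ico_one (hl : IsPartition l n) (hn : 0 < n) : ∑ i ∈ Ico 1 n, l i = n - l 0 := by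
  have h := sum_range_eq_add_Ico l hn
  have := hl.2.1
  omega

lemma mul_le_sub_head (hl : IsPartition l n) {i : ℕ} (hi : 1 ≤ i) : i * l i ≤ n - l 0 := by
  rcases le_or_gt n i with hni | hin
  · simp [hl.2.2 i hni]
  calc i * l i = ∑ _k ∈ Ico 1 (i + 1), l i := by simp
    _ ≤ ∑ k ∈ Ico 1 (i + 1), l k := sum_le_sum fun k hk => hl.1 (mem_Ico.1 hk).2.le_pred
    _ ≤ ∑ k ∈ Ico 1 n, l k := sum_le_sum_of_subset (Ico_subset_Ico le_rfl hin)
    _ = n - l 0 := hl.sum_Ico_one (by omega)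

lemma le_sub_head (hl : IsPartition l n) {i : ℕ} (hi : 1 ≤ i) : l i ≤ n - l 0 :=
  (Nat.le_mul_of_pos_left _ hi).trans (hl.mul_le_sub_head hi)

lemma eq_zero_of_sub_head_lt (hl : IsPartition l n) {i : ℕ} (hi : n - l 0 < i) : l i = 0 := by
  by_contra h
  have := hl.mul_le_sub_head (i := i) (by omega)
  have := Nat.le_mul_of_pos_right i (Nat.pos_of_ne_zero h)
  omega

lemma conj_le (hl : IsPartition l n) (b : ℕ) : conj l b ≤ n - l 0 + 1 :=
  conj_le_of_forall_lt fun i hbi => by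
    by_contra h
    have := hl.eq_zero_of_sub_head_lt (i := i) (by omega)
    omega

lemma conj_le_one (hl : IsPartition l n) {b : ℕ} (hb : n - l 0 ≤ b) : conj l b ≤ 1 :=
  conj_le_of_forall_lt fun i hbi => by
    by_contra h
    have := hl.le_sub_head (i := i) (by omega)
    omega

lemma sum_choose_two_tail_le (hl : IsPartition l n) :
    ∑ i ∈ Ico 1 n, (l i).choose 2 ≤ (n - l 0) ^ 2 := by
  rcases Nat.eq_zero_or_pos n with rfl | hn
  · simp
  calc ∑ i ∈ Ico 1 n, (l i).choose 2
      ≤ ∑ i ∈ Ico 1 n, l i * (n - l 0) := sum_le_sum fun i hi => by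
        rw [Nat.choose_two_right]
        exact (Nat.div_le_self _ _).trans
          (Nat.mul_le_mul_left _ ((Nat.sub_le _ _).trans (hl.le_sub_head (mem_Ico.1 hi).1)))
    _ = (n - l 0) ^ 2 := by rw [← sum_mul, hl.sum_Ico_one hn, sq]

lemma sum_choose_two_conj_le (hl : IsPartition l n) :
    ∑ b ∈ range n, (conj l b).choose 2 ≤ (n - l 0) * (n - l 0 + 1).choose 2 := by
  calc ∑ b ∈ range n, (conj l b).choose 2 = ∑ b ∈ range (n - l 0), (conj l b).choose 2 := by
        refine (sum_subset (range_subset_range.2 (Nat.sub_le _ _)) fun b _ hb => ?_).symm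
        exact Nat.choose_eq_zero_of_lt
          ((hl.conj_le_one (by simpa using hb)).trans_lt one_lt_two)
    _ ≤ (n - l 0) * (n - l 0 + 1).choose 2 := by
        simpa using sum_le_card_nsmul (range (n - l 0)) _ _ fun b _ =>
          Nat.choose_mono 2 (hl.conj_le b)

end IsPartition

lemma rOf_eq {l : ℕ → ℕ} {n : ℕ} (hn : 0 < n) :
    rOf l n = (((l 0).choose 2 : ℝ) + (∑ i ∈ Ico 1 n, (l i).choose 2 : ℕ)
      - (∑ b ∈ range n, (conj l b).choose 2 : ℕ)) / n.choose 2 := by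
  rw [rOf, sum_sub_distrib, sum_range_eq_add_Ico _ hn]
  push_cast
  ring

lemma eigenvalue_sub_eq {n j A B : ℝ} (hn : n ≠ 0) (hn1 : n - 1 ≠ 0) :
    (1 / n + (n - 1) / n * (((n - j) * (n - j - 1) / 2 + A - B) / (n * (n - 1) / 2)))
      - (1 - 2 * j / n) = (j ^ 2 + j + 2 * (A - B)) / n ^ 2 := by
  field_simp
  ring

theorem stmt14 (j : ℕ) :
    ∃ C : ℝ, ∀ n : ℕ, 2 ≤ n → ∀ l : ℕ → ℕ, IsPartition l n → n - l 0 = j →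
      |(1 / (n : ℝ) + ((n : ℝ) - 1) / n * rOf l n) - (1 - 2 * (j : ℝ) / n)| ≤
        C / (n : ℝ) ^ 2 := by
  refine ⟨j ^ 2 + j + 2 * (j ^ 2 + j * (j + 1).choose 2), fun n hn l hl hj => ?_⟩
  set A := ∑ i ∈ Ico 1 n, (l i).choose 2
  set B := ∑ b ∈ range n, (conj l b).choose 2
  have hA : (A : ℝ) ≤ j ^ 2 := by exact_mod_cast hj ▸ hl.sum_choose_two_tail_le
  have hB : (B : ℝ) ≤ j * (j + 1).choose 2 := by exact_mod_cast hj ▸ hl.sum_choose_two_conj_le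
  have hhead : ((l 0).choose 2 : ℝ) = (n - j) * (n - j - 1) / 2 := by
    rw [Nat.cast_choose_two, show l 0 = n - j by have := hl.head_le (by omega); omega,
      Nat.cast_sub (by omega)]
  have hn' : (2 : ℝ) ≤ n := by exact_mod_cast hn
  rw [rOf_eq (by omega), hhead, Nat.cast_choose_two,
    eigenvalue_sub_eq (by positivity) (by linarith), abs_div, abs_pow, Nat.abs_cast]
  refine div_le_div_of_nonneg_right (abs_le.2 ?_) (sq_nonneg _)
  constructor <;> nlinarith [Nat.cast_nonneg (α := ℝ) A, Nat.cast_nonneg (α := ℝ) B]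
end
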